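/- No even binary linear [29,11,10] code whose dual has minimum weight at least 6 contains a codeword of weight 28. -/

import Mathlib

/-!
Dual distance at least 6 makes `C` an orthogonal array of strength 5, so for `s ≤ 5` the
binomial moments `∑_{c ∈ C} (wt c).choose s` are `2 ^ (11 - s) * (29).choose s`. A codeword `v`
of weight 28 confines every other nonzero codeword `c` to weights between 10 and 20 (because
`wt (c + v) ≥ 10` and `wt (c + v) + wt c + wt v ≤ 2 * 29`), so summing over `C` a degree-5
polynomial that interpolates `(-1) ^ (w / 2)` at these weights evaluates
`T = ∑_{c ∈ C} (-1) ^ (wt c / 2)` to 576.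
On the other hand `x ↦ (-1) ^ (wt x / 2)` is a quadratic form on the even code `C` with polar
form `(-1) ^ (x ⬝ᵥ y)`, so `T ^ 2 = |C| * ∑_{z ∈ C ∩ C⊥} (-1) ^ (wt z / 2)`; on `C ∩ C⊥` the form
is a character, so the last sum is 0 or `|C ∩ C⊥|`. Hence `T ^ 2` is 0 or a power of 2, but
`576 ^ 2 = 2 ^ 12 * 3 ^ 4`.
-/

open Finset

lemma AddChar.map_sum_eq_prod {A M κ : Type*} [AddCommMonoid A] [CommMonoid M] (ψ : AddChar A M)
    (s : Finset κ) (f : κ → A) : ψ (∑ i ∈ s, f i) = ∏ i ∈ s, ψ (f i) := by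
  induction s using Finset.cons_induction with
  | empty => exact ψ.map_zero_eq_one
  | cons i s hi ih => rw [sum_cons, prod_cons, ψ.map_add_eq_mul, ih]

lemma card_eq_two_pow_finrank {V : Type*} [AddCommGroup V] [Module (ZMod 2) V] [Fintype V] :
    Fintype.card V = 2 ^ Module.finrank (ZMod 2) V := by
  rw [Module.card_eq_pow_finrank (K := ZMod 2), ZMod.card]

variable {ι : Type*}

def signChar : AddChar (ZMod 2) ℤ := AddChar.zmodChar 2 neg_one_sq

lemma signChar_natCast (n : ℕ) : signChar n = (-1) ^ n := AddChar.zmodChar_apply' _ n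

lemma signChar_eq_one_iff {x : ZMod 2} : signChar x = 1 ↔ x = 0 := by
  rw [signChar, AddChar.zmodChar_apply]; revert x; decide

lemma prod_one_sub_signChar (x : ι → ZMod 2) (t : Finset ι) :
    ∏ i ∈ t, (1 - signChar (x i)) = if ∀ i ∈ t, x i = 1 then 2 ^ #t else 0 := by
  have key : ∀ a : ZMod 2, 1 - signChar a = if a = 1 then 2 else 0 := by
    simp only [signChar, AddChar.zmodChar_apply]; decide
  simp only [key, prod_ite_zero, prod_const]

variable [Fintype ι]

def dualCode {R : Type*} [CommSemiring R] (C : Submodule R (ι → R)) :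
    Submodule R (ι → R) where
  carrier := {w | ∀ c ∈ C, c ⬝ᵥ w = 0}
  add_mem' hv hw c hc := by rw [dotProduct_add, hv c hc, hw c hc, add_zero]
  zero_mem' c _ := dotProduct_zero c
  smul_mem' a w hw c hc := by rw [dotProduct_smul, hw c hc, smul_zero]

@[simp]
lemma mem_dualCode {R : Type*} [CommSemiring R] {C : Submodule R (ι → R)} {w : ι → R} :
    w ∈ dualCode C ↔ ∀ c ∈ C, c ⬝ᵥ w = 0 :=
  Iff.rfl

lemma hammingNorm_eq_sum_val (x : ι → ZMod 2) : hammingNorm x = ∑ i, (x i).val := by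
  rw [hammingNorm, card_filter]
  exact sum_congr rfl fun i _ => by generalize x i = a; revert a; decide

lemma sum_apply_eq_hammingNorm (x : ι → ZMod 2) : ∑ i, x i = hammingNorm x := by
  simp [hammingNorm_eq_sum_val]

lemma signChar_dotProduct (x y : ι → ZMod 2) :
    signChar (x ⬝ᵥ y) = (-1) ^ hammingNorm (x * y) := by
  rw [← signChar_natCast, ← sum_apply_eq_hammingNorm]
  rfl

lemma dotProduct_self_eq_hammingNorm (x : ι → ZMod 2) : x ⬝ᵥ x = hammingNorm x := by
  rw [← sum_apply_eq_hammingNorm]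
  exact sum_congr rfl fun i _ => by generalize x i = a; revert a; decide

lemma hammingNorm_add_add_two_mul_hammingNorm_mul (x y : ι → ZMod 2) :
    hammingNorm (x + y) + 2 * hammingNorm (x * y) = hammingNorm x + hammingNorm y := by
  have key : ∀ a b : ZMod 2, (a + b).val + 2 * (a * b).val = a.val + b.val := by decide
  simp only [hammingNorm_eq_sum_val, mul_sum, ← sum_add_distrib]
  exact sum_congr rfl fun i _ => key (x i) (y i)

lemma hammingNorm_add_add_add_le (x y : ι → ZMod 2) :
    hammingNorm (x + y) + hammingNorm x + hammingNorm y ≤ 2 * Fintype.card ι := by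
  have key : ∀ a b : ZMod 2, (a + b).val + a.val + b.val ≤ 2 := by decide
  simp only [hammingNorm_eq_sum_val, ← sum_add_distrib, ← card_univ, card_eq_sum_ones, mul_sum]
  exact sum_le_sum fun i _ => key (x i) (y i)

def halfWeightSign (x : ι → ZMod 2) : ℤ := (-1) ^ (hammingNorm x / 2)

lemma halfWeightSign_mul_halfWeightSign {x y : ι → ZMod 2} (hx : Even (hammingNorm x))
    (hy : Even (hammingNorm y)) :
    halfWeightSign x * halfWeightSign y = halfWeightSign (x + y) * signChar (x ⬝ᵥ y) := by
  obtain ⟨a, ha⟩ := hx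
  obtain ⟨b, hb⟩ := hy
  have h := hammingNorm_add_add_two_mul_hammingNorm_mul x y
  rw [halfWeightSign, halfWeightSign, halfWeightSign, signChar_dotProduct, ← pow_add, ← pow_add]
  congr 1
  omega

lemma sum_halfWeightSign_eq_zero_or_card (S : Submodule (ZMod 2) (ι → ZMod 2)) [Fintype S]
    (heven : ∀ x ∈ S, Even (hammingNorm x)) (hS : S ≤ dualCode S) :
    ∑ z : S, halfWeightSign (z : ι → ZMod 2) = 0 ∨
      ∑ z : S, halfWeightSign (z : ι → ZMod 2) = Fintype.card S := by
  classical
  let ψ : AddChar S ℤ :=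
    { toFun z := halfWeightSign (z : ι → ZMod 2)
      map_zero_eq_one' := by simp [halfWeightSign]
      map_add_eq_mul' x y := by
        rw [halfWeightSign_mul_halfWeightSign (heven x x.2) (heven y y.2), hS y.2 x x.2,
          AddChar.map_zero_eq_one, mul_one]
        rfl }
  have h := AddChar.sum_eq_ite ψ
  split_ifs at h
  · exact Or.inr h
  · exact Or.inl h

lemma prod_one_sub_signChar_eq_sum_powerset [DecidableEq ι] (x : ι → ZMod 2) (t : Finset ι) :
    ∏ i ∈ t, (1 - signChar (x i)) =
      ∑ a ∈ t.powerset, (-1) ^ #a * signChar (x ⬝ᵥ fun i => if i ∈ a then 1 else 0) := by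
  have hdot (a : Finset ι) : (x ⬝ᵥ fun i => if i ∈ a then 1 else 0) = ∑ i ∈ a, x i := by
    simp [dotProduct]
  simp only [sub_eq_neg_add, prod_add, prod_const_one, mul_one, prod_neg, hdot,
    AddChar.map_sum_eq_prod]

lemma hammingNorm_indicator [DecidableEq ι] (a : Finset ι) :
    hammingNorm (fun i => if i ∈ a then 1 else 0 : ι → ZMod 2) = #a := by
  simp [hammingNorm]

lemma choose_hammingNorm_eq_card_filter [DecidableEq ι] (x : ι → ZMod 2) (s : ℕ) :
    (hammingNorm x).choose s = #{t ∈ powersetCard s univ | ∀ i ∈ t, x i = 1} := by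
  have h : ∀ a : ZMod 2, a ≠ 0 ↔ a = 1 := by decide
  rw [hammingNorm, ← card_powersetCard]
  congr 1
  ext t
  simp [mem_powersetCard, subset_iff, h, and_comm]

section Code

variable {C : Submodule (ZMod 2) (ι → ZMod 2)} [Fintype C]

lemma sum_signChar_dotProduct_of_mem {w : ι → ZMod 2} (hw : w ∈ dualCode C) :
    ∑ c : C, signChar ((c : ι → ZMod 2) ⬝ᵥ w) = Fintype.card C := by
  simp [hw _ (Subtype.property _)]

lemma sum_signChar_dotProduct_of_notMem {w : ι → ZMod 2} (hw : w ∉ dualCode C) :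
    ∑ c : C, signChar ((c : ι → ZMod 2) ⬝ᵥ w) = 0 := by
  let ψ : AddChar C ℤ := signChar.compAddMonoidHom
    { toFun := fun c => (c : ι → ZMod 2) ⬝ᵥ w
      map_zero' := zero_dotProduct w
      map_add' := fun a b => add_dotProduct a b w }
  have hψ : ψ ≠ 0 := by
    simpa [AddChar.eq_zero_iff, ψ, signChar_eq_one_iff] using hw
  exact AddChar.sum_eq_zero_iff_ne_zero.2 hψ

lemma card_filter_forall_eq_one_mul_two_pow [DecidableEq ι] {d : ℕ}
    (hdual : ∀ w ∈ dualCode C, w ≠ 0 → d ≤ hammingNorm w) {t : Finset ι} (ht : #t < d) :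
    #{c : C | ∀ i ∈ t, (c : ι → ZMod 2) i = 1} * 2 ^ #t = Fintype.card C := by
  have hind : ∀ a ∈ t.powerset, a ≠ ∅ →
      (fun i => if i ∈ a then 1 else 0 : ι → ZMod 2) ∉ dualCode C := by
    intro a ha ha0 hmem
    have hw := hdual _ hmem fun h => ha0 (by
      rw [← card_eq_zero, ← hammingNorm_indicator, h, hammingNorm_zero])
    rw [hammingNorm_indicator] at hw
    exact absurd (card_le_card (mem_powerset.1 ha)) (by omega)
  zify
  calc (#{c : C | ∀ i ∈ t, (c : ι → ZMod 2) i = 1} : ℤ) * 2 ^ #t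
      = ∑ c : C, ∏ i ∈ t, (1 - signChar ((c : ι → ZMod 2) i)) := by
        rw [card_filter, Nat.cast_sum, sum_mul]
        refine sum_congr rfl fun c _ => ?_
        rw [prod_one_sub_signChar]
        split_ifs <;> simp
    _ = ∑ a ∈ t.powerset, (-1) ^ #a *
          ∑ c : C, signChar ((c : ι → ZMod 2) ⬝ᵥ fun i => if i ∈ a then 1 else 0) := by
        simp only [prod_one_sub_signChar_eq_sum_powerset, mul_sum]
        exact sum_comm
    _ = Fintype.card C := by
        rw [sum_eq_single_of_mem ∅ (empty_mem_powerset t) fun a ha ha0 => by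
          rw [sum_signChar_dotProduct_of_notMem (hind a ha ha0), mul_zero]]
        rw [sum_signChar_dotProduct_of_mem (by simp)]
        simp

lemma sum_choose_hammingNorm_mul_two_pow [DecidableEq ι] {d : ℕ}
    (hdual : ∀ w ∈ dualCode C, w ≠ 0 → d ≤ hammingNorm w) {s : ℕ} (hs : s < d) :
    (∑ c : C, (hammingNorm (c : ι → ZMod 2)).choose s) * 2 ^ s =
      (Fintype.card ι).choose s * Fintype.card C := by
  simp_rw [choose_hammingNorm_eq_card_filter, card_filter]
  rw [sum_comm, sum_mul, ← card_univ, ← card_powersetCard, card_eq_sum_ones, sum_mul]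
  refine sum_congr rfl fun t ht => ?_
  rw [one_mul, ← (mem_powersetCard.1 ht).2, ← card_filter]
  exact card_filter_forall_eq_one_mul_two_pow hdual ((mem_powersetCard.1 ht).2 ▸ hs)

lemma sq_sum_halfWeightSign [Fintype ↥(C ⊓ dualCode C)]
    (heven : ∀ c ∈ C, Even (hammingNorm c)) :
    (∑ c : C, halfWeightSign (c : ι → ZMod 2)) ^ 2 =
      Fintype.card C * ∑ z : ↥(C ⊓ dualCode C), halfWeightSign (z : ι → ZMod 2) := by
  classical
  have hself (x : C) : (x : ι → ZMod 2) ⬝ᵥ x = 0 := by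
    rw [dotProduct_self_eq_hammingNorm, (heven x x.2).natCast_zmod_two]
  calc (∑ c : C, halfWeightSign (c : ι → ZMod 2)) ^ 2
      = ∑ x : C, ∑ y : C, halfWeightSign ((x + y : C) : ι → ZMod 2) *
          signChar ((x : ι → ZMod 2) ⬝ᵥ y) := by
        rw [sq, sum_mul_sum]
        refine sum_congr rfl fun x _ => sum_congr rfl fun y _ => ?_
        exact halfWeightSign_mul_halfWeightSign (heven x x.2) (heven y y.2)
    _ = ∑ x : C, ∑ z : C,
          halfWeightSign (z : ι → ZMod 2) * signChar ((x : ι → ZMod 2) ⬝ᵥ z) := by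
        refine sum_congr rfl fun x _ => (Fintype.sum_equiv (Equiv.addLeft x) _ _ fun z => ?_).symm
        simp only [Equiv.coe_addLeft, ← add_assoc, ZModModule.add_self, zero_add,
          Submodule.coe_add, dotProduct_add, hself, zero_add]
    _ = ∑ z : C,
          halfWeightSign (z : ι → ZMod 2) * ∑ x : C, signChar ((x : ι → ZMod 2) ⬝ᵥ z) := by
        rw [sum_comm]
        simp only [mul_sum]
    _ = ∑ z : C, if (z : ι → ZMod 2) ∈ dualCode C then
          (Fintype.card C : ℤ) * halfWeightSign (z : ι → ZMod 2) else 0 := by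
        refine sum_congr rfl fun z _ => ?_
        split_ifs with hz
        · rw [sum_signChar_dotProduct_of_mem hz, mul_comm]
        · rw [sum_signChar_dotProduct_of_notMem hz, mul_zero]
    _ = Fintype.card C * ∑ z : ↥(C ⊓ dualCode C), halfWeightSign (z : ι → ZMod 2) := by
        rw [mul_sum,
          ← sum_subtype (univ.filter (· ∈ C)) (by simp) fun x =>
            if x ∈ dualCode C then (Fintype.card C : ℤ) * halfWeightSign x else 0,
          ← sum_subtype (univ.filter (· ∈ C ⊓ dualCode C)) (by simp) fun x =>
            (Fintype.card C : ℤ) * halfWeightSign x,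
          sum_filter, sum_filter]
        refine sum_congr rfl fun x _ => ?_
        simp only [Submodule.mem_inf, ite_and]

lemma sq_sum_halfWeightSign_eq_zero_or_two_pow (heven : ∀ c ∈ C, Even (hammingNorm c)) :
    (∑ c : C, halfWeightSign (c : ι → ZMod 2)) ^ 2 = 0 ∨
      ∃ k : ℕ, (∑ c : C, halfWeightSign (c : ι → ZMod 2)) ^ 2 = 2 ^ k := by
  classical
  rw [sq_sum_halfWeightSign heven, card_eq_two_pow_finrank]
  rcases sum_halfWeightSign_eq_zero_or_card (C ⊓ dualCode C) (fun x hx => heven x hx.1)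
      (fun x hx c hc => hx.2 c hc.1) with h | h
  · exact Or.inl (by rw [h, mul_zero])
  · exact Or.inr ⟨_, by rw [h, card_eq_two_pow_finrank]; push_cast; rw [← pow_add]⟩

end Code

-- The degree-5 interpolant of `32 * (-1) ^ (w / 2)` at `w = 10, 12, …, 20`, in binomial basis.
def weightInterpolant (w : ℕ) : ℤ :=
  -176096 * w.choose 0 + 54072 * w.choose 1 - 14000 * w.choose 2 + 2872 * w.choose 3 -
    416 * w.choose 4 + 32 * w.choose 5

lemma weightInterpolant_eq {w : ℕ} (hw₁ : 10 ≤ w) (hw₂ : w ≤ 20) (hw : Even w) :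
    weightInterpolant w = 32 * (-1) ^ (w / 2) := by
  obtain ⟨k, rfl⟩ := hw
  have hk₁ : 5 ≤ k := by omega
  have hk₂ : k ≤ 10 := by omega
  interval_cases k <;> decide

lemma sum_neg_one_pow_half_eq_576 {X : Type*} [Fintype X] [DecidableEq X] (wt : X → ℕ)
    {x₀ x₁ : X} (h₀ : wt x₀ = 0) (h₁ : wt x₁ = 28)
    (hwt : ∀ x, x ≠ x₀ → x ≠ x₁ → 10 ≤ wt x ∧ wt x ≤ 20 ∧ Even (wt x))
    (hmom : ∀ s ≤ 5, (∑ x, (wt x).choose s) * 2 ^ s = (29).choose s * 2 ^ 11) :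
    ∑ x, (-1 : ℤ) ^ (wt x / 2) = 576 := by
  have hx₀₁ : x₀ ≠ x₁ := fun h => by rw [h, h₁] at h₀; exact absurd h₀ (by norm_num)
  -- `-176128 = weightInterpolant 0 - 32` and `81920 = weightInterpolant 28 - 32`.
  have hpoint (x : X) : weightInterpolant (wt x) = 32 * (-1) ^ (wt x / 2) +
      (if x = x₀ then -176128 else 0) + (if x = x₁ then 81920 else 0) := by
    by_cases hx₀ : x = x₀
    · subst hx₀
      rw [if_pos rfl, if_neg hx₀₁, h₀]
      decide
    by_cases hx₁ : x = x₁
    · subst hx₁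
      rw [if_neg hx₀, if_pos rfl, h₁]
      decide
    obtain ⟨hw₁, hw₂, hw⟩ := hwt x hx₀ hx₁
    rw [if_neg hx₀, if_neg hx₁, weightInterpolant_eq hw₁ hw₂ hw, add_zero, add_zero]
  have hM (s : ℕ) (hs : s ≤ 5) :
      (∑ x, ((wt x).choose s : ℤ)) * 2 ^ s = (29).choose s * 2 ^ 11 := by
    exact_mod_cast hmom s hs
  have hsum := sum_congr rfl fun x (_ : x ∈ univ) => hpoint x
  simp only [weightInterpolant, sum_add_distrib, sum_sub_distrib, ← mul_sum, sum_ite_eq',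
    mem_univ, if_true] at hsum
  have m0 := hM 0 (by norm_num)
  have m1 := hM 1 (by norm_num)
  have m2 := hM 2 (by norm_num)
  have m3 := hM 3 (by norm_num)
  have m4 := hM 4 (by norm_num)
  have m5 := hM 5 (by norm_num)
  norm_num [Nat.choose] at m0 m1 m2 m3 m4 m5 hsum
  linarith

/-- No even binary linear [29,11,10] code whose dual has minimum weight at
least 6 contains a codeword of weight 28. -/
theorem no_weight28_in_even_29_11_10
    (C : Submodule (ZMod 2) (Fin 29 → ZMod 2))
    (hdim : Module.finrank (ZMod 2) C = 11)
    (hmin : ∀ v ∈ C, v ≠ 0 → 10 ≤ hammingNorm v)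
    (heven : ∀ v ∈ C, Even (hammingNorm v))
    (hdual : ∀ w : Fin 29 → ZMod 2, (∀ v ∈ C, dotProduct v w = 0) → w ≠ 0 →
      6 ≤ hammingNorm w) :
    ∀ v ∈ C, hammingNorm v ≠ 28 := by
  classical
  intro v hv hv28
  have hcard : Fintype.card C = 2 ^ 11 := by rw [card_eq_two_pow_finrank, hdim]
  have hmom (s : ℕ) (hs : s ≤ 5) :
      (∑ c : C, (hammingNorm (c : Fin 29 → ZMod 2)).choose s) * 2 ^ s =
        (29).choose s * 2 ^ 11 := by
    rw [sum_choose_hammingNorm_mul_two_pow hdual (by omega : s < 6), Fintype.card_fin, hcard]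
  have hwt (c : C) (hc₀ : c ≠ 0) (hcv : c ≠ ⟨v, hv⟩) :
      10 ≤ hammingNorm (c : Fin 29 → ZMod 2) ∧ hammingNorm (c : Fin 29 → ZMod 2) ≤ 20 ∧
        Even (hammingNorm (c : Fin 29 → ZMod 2)) := by
    have hc := hmin c c.2 (by simpa using hc₀)
    have hcv' := hmin _ (C.add_mem c.2 hv) fun h =>
      hcv (Subtype.ext (sub_eq_zero.1 (by rwa [ZModModule.sub_eq_add])))
    have hle := hammingNorm_add_add_add_le (c : Fin 29 → ZMod 2) v
    rw [Fintype.card_fin, hv28] at hle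
    exact ⟨hc, by omega, heven c c.2⟩
  have hsum : ∑ c : C, halfWeightSign (c : Fin 29 → ZMod 2) = 576 :=
    sum_neg_one_pow_half_eq_576 (fun c : C => hammingNorm (c : Fin 29 → ZMod 2))
      (x₀ := 0) (x₁ := ⟨v, hv⟩) (by simp) hv28 hwt hmom
  rcases sq_sum_halfWeightSign_eq_zero_or_two_pow heven with h | ⟨k, hk⟩
  · rw [hsum] at h
    norm_num at h
  · have h3 : 3 ∣ 2 ^ k := by
      rw [hsum] at hk
      exact_mod_cast hk ▸ (by norm_num : (3 : ℤ) ∣ 576 ^ 2)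
    exact absurd (Nat.prime_three.dvd_of_dvd_pow h3) (by norm_num)
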